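/- arXiv:1209.0016 — 3 statements merged into one kernel-verified Lean document; each statement's English description precedes it below -/
import Mathlib

section
/- Let M ⊂ ℝ^p be compact and connected, satisfying the regularity assumption with some modulus c. Fix x_0 ∈ M and let F_1^0 = {f ∈ F_1 : f(x_0) = 0}. Then there is a constant C > 0 such that for all 0 < η ≤ 1, log N_∞(F_1^0, η) ≤ C ( log(1/η) + N(M, η/C) ), where N(M, ε) is the minimal number of Euclidean balls of radius ε needed to cover M, and N_∞(F_1^0, η) is the minimal number of balls of radius η in supremum norm needed to cover F_1^0. -/
open MeasureTheory Metric Filter ProbabilityTheory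

noncomputable section

/-- Euclidean space ℝ^p. -/
abbrev Euc (p : ℕ) := EuclideanSpace ℝ (Fin p)

/-- Intrinsic (shortest-path) metric on a subset `M` of ℝ^p. -/
def intrinsicDist {p : ℕ} (M : Set (Euc p)) (x x' : Euc p) : ℝ :=
  sInf {T : ℝ | 0 ≤ T ∧ ∃ γ : ℝ → Euc p,
    LipschitzOnWith 1 γ (Set.Icc 0 T) ∧ (∀ t ∈ Set.Icc (0:ℝ) T, γ t ∈ M) ∧
    γ 0 = x ∧ γ T = x'}

/-- Intrinsic diameter of `M`. -/
def idiam {p : ℕ} (M : Set (Euc p)) : ℝ :=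
  sSup (Set.image2 (intrinsicDist M) M M)

/-- `M` satisfies the regularity assumption with modulus `c`. -/
def RegularityAssumption {p : ℕ} (M : Set (Euc p)) (c : ℝ → ℝ) : Prop :=
  (∀ r, 0 ≤ c r) ∧ MonotoneOn c (Set.Ici 0) ∧
    Tendsto c (nhdsWithin 0 (Set.Ioi 0)) (nhds 0) ∧
    ∀ x ∈ M, ∀ x' ∈ M, intrinsicDist M x x' ≤ (1 + c ‖x - x'‖) * ‖x - x'‖

/-- The class `F_L` of `L`-Lipschitz maps (w.r.t. the intrinsic metric on `M`). -/
def FL {p : ℕ} (M : Set (Euc p)) (L : ℝ) : Set (Euc p → Euc p) :=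
  {f | ∀ x ∈ M, ∀ x' ∈ M, ‖f x - f x'‖ ≤ L * intrinsicDist M x x'}

/-- Continuum energy of `f` w.r.t. `μ`. -/
def energy {p : ℕ} (μ : Measure (Euc p)) (f : Euc p → Euc p) : ℝ :=
  ∫ x, ∫ x', ‖f x - f x'‖ ^ 2 ∂μ ∂μ

/-- Discrete energy of a configuration `y = (y_1, …, y_n)`. -/
def denergy {p n : ℕ} (y : Fin n → Euc p) : ℝ :=
  (1 / ((n : ℝ) * ((n : ℝ) - 1))) *
    ∑ i : Fin n, ∑ j : Fin n, if i ≠ j then ‖y i - y j‖ ^ 2 else 0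

/-- The MVU constraint set `𝒴_{n,r}` for the data `x`. -/
def Ynr {p n : ℕ} (x : Fin n → Euc p) (r : ℝ) : Set (Fin n → Euc p) :=
  {y | ∀ i j, ‖x i - x j‖ ≤ r → ‖y i - y j‖ ≤ ‖x i - x j‖}

end

/-- Euclidean covering number of a set `M ⊂ ℝ^p`. -/
noncomputable def coverNumSet {p : ℕ} (M : Set (Euc p)) (ε : ℝ) : ℕ :=
  sInf {N : ℕ | ∃ T : Finset (Euc p), T.card = N ∧ ∀ x ∈ M, ∃ z ∈ T, ‖x - z‖ ≤ ε}

/-- Covering number of a class of functions `G` for the supremum norm over `M`. -/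
noncomputable def coverNumF {p : ℕ} (G : Set (Euc p → Euc p)) (M : Set (Euc p)) (ε : ℝ) : ℕ :=
  sInf {N : ℕ | ∃ T : Finset (Euc p → Euc p), T.card = N ∧
    ∀ f ∈ G, ∃ g ∈ T, ∀ x ∈ M, ‖f x - g x‖ ≤ ε}

/-!
On scales below `1`, every `f` in the class is `(1 + c 1)`-Lipschitz for the Euclidean distance.
Take a `2ε`-net of `M` inside `M` containing `x₀`, with `ε = η / C`. As `M` is connected, the
graph joining net points at distance `< 6ε` is connected, so a parent map along a spanning tree
of shortest paths leads every net point back to `x₀`. Round the values of `f` to the lattice of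
mesh `τ ≍ η / p`. Since `f x₀ = 0`, the rounded values on the net are recovered from the rounded
increments along the parent map, and each increment takes at most `(4p + 7)^p` values. Rounded
values on the net determine `f` up to `η`, so there are at most `(4p + 7)^(p · #net)` classes,
and `#net ≤ 2 N(M, ε)`.
-/

theorem eq_of_sub_parent_eq {α β : Type*} [AddGroup β] {F G : α → β} (parent : α → α)
    (rank : α → ℕ) (root : α) (hrank : ∀ a ≠ root, rank (parent a) < rank a)
    (hroot : F root = G root) (hsub : ∀ a, F a - F (parent a) = G a - G (parent a)) :
    F = G := by
  funext a
  induction h : rank a using Nat.strong_induction_on generalizing a with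
  | _ n ih =>
    by_cases ha : a = root
    · rw [ha, hroot]
    · have hparent : F (parent a) = G (parent a) := ih _ (h ▸ hrank a ha) _ rfl
      simpa [hparent] using hsub a

theorem SimpleGraph.Connected.exists_parent {V : Type*} {G : SimpleGraph V} (hG : G.Connected)
    (r : V) : ∃ parent : V → V, parent r = r ∧
      ∀ v ≠ r, G.Adj v (parent v) ∧ G.dist (parent v) r < G.dist v r := by
  classical
  have hstep : ∀ v ≠ r, ∃ w, G.Adj v w ∧ G.dist w r < G.dist v r := by
    intro v hv
    obtain ⟨w, hw⟩ := hG.exists_walk_length_eq_dist v r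
    cases w with
    | nil => exact absurd rfl hv
    | cons hadj q =>
      refine ⟨_, hadj, (SimpleGraph.dist_le q).trans_lt ?_⟩
      rw [← hw, SimpleGraph.Walk.length_cons]
      exact Nat.lt_succ_self _
  choose! parent hparent using hstep
  exact ⟨fun v => if v = r then r else parent v, by simp,
    fun v hv => by simpa [hv] using hparent v hv⟩

theorem Real.log_natCast_le_log_natCast {m n : ℕ} (h : m ≤ n) : Real.log m ≤ Real.log n := by
  rcases m.eq_zero_or_pos with rfl | hm
  · simpa using Real.log_natCast_nonneg n
  · exact Real.log_le_log (by exact_mod_cast hm) (by exact_mod_cast h)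

section Nets

variable {E : Type*} [SeminormedAddCommGroup E]

theorem IsPreconnected.exists_norm_sub_lt_of_net {M s A : Set E} (hM : IsPreconnected M)
    (hsM : s ⊆ M) {r : ℝ} (hr : 0 < r) (hs : ∀ x ∈ M, ∃ z ∈ s, ‖x - z‖ ≤ r)
    (hAs : A ⊆ s) (hA : A.Nonempty) (hsA : (s \ A).Nonempty) :
    ∃ z ∈ A, ∃ w ∈ s \ A, ‖z - w‖ < 3 * r := by
  by_contra! hfar
  set U := ⋃ z ∈ A, Metric.ball z (3 * r / 2)
  set V := ⋃ w ∈ s \ A, Metric.ball w (3 * r / 2)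
  have hMUV : M ⊆ U ∪ V := by
    intro x hx
    obtain ⟨z, hz, hxz⟩ := hs x hx
    have hball : x ∈ Metric.ball z (3 * r / 2) := mem_ball_iff_norm.2 (by linarith)
    by_cases hzA : z ∈ A
    · exact Or.inl (Set.mem_biUnion hzA hball)
    · exact Or.inr (Set.mem_biUnion ⟨hz, hzA⟩ hball)
  obtain ⟨a, ha⟩ := hA
  obtain ⟨b, hb⟩ := hsA
  obtain ⟨x, -, hxU, hxV⟩ := hM U V (isOpen_biUnion fun _ _ => Metric.isOpen_ball)
    (isOpen_biUnion fun _ _ => Metric.isOpen_ball) hMUV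
    ⟨a, hsM (hAs ha), Set.mem_biUnion ha (Metric.mem_ball_self (by positivity))⟩
    ⟨b, hsM hb.1, Set.mem_biUnion hb (Metric.mem_ball_self (by positivity))⟩
  obtain ⟨z, hz, hxz⟩ := Set.mem_iUnion₂.1 hxU
  obtain ⟨w, hw, hxw⟩ := Set.mem_iUnion₂.1 hxV
  rw [mem_ball_iff_norm] at hxz hxw
  have := norm_sub_le_norm_sub_add_norm_sub z x w
  rw [norm_sub_rev z x] at this
  linarith [hfar z hz w hw]

def proximityGraph (s : Set E) (ρ : ℝ) : SimpleGraph s :=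
  SimpleGraph.fromRel fun z w => ‖(z : E) - w‖ < ρ

theorem norm_sub_lt_of_proximityGraph_adj {s : Set E} {ρ : ℝ} {z w : s}
    (h : (proximityGraph s ρ).Adj z w) : ‖(z : E) - w‖ < ρ := by
  obtain ⟨-, h | h⟩ := (SimpleGraph.fromRel_adj _ _ _).1 h
  · exact h
  · rwa [norm_sub_rev]

theorem IsPreconnected.proximityGraph_connected {M s : Set E} (hM : IsPreconnected M)
    (hsM : s ⊆ M) {r : ℝ} (hr : 0 < r) (hs : ∀ x ∈ M, ∃ z ∈ s, ‖x - z‖ ≤ r)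
    (hne : s.Nonempty) : (proximityGraph s (3 * r)).Connected := by
  have : Nonempty s := hne.to_subtype
  refine ⟨fun u v => ?_⟩
  by_contra huv
  set A : Set E := Subtype.val '' {w | (proximityGraph s (3 * r)).Reachable u w}
  obtain ⟨_, ⟨z, hz, rfl⟩, w, ⟨hws, hwA⟩, hzw⟩ := hM.exists_norm_sub_lt_of_net hsM hr hs
    (Subtype.coe_image_subset s _) ⟨u, u, SimpleGraph.Reachable.refl u, rfl⟩
    ⟨v, v.2, fun ⟨v', hv', hvv'⟩ => huv (Subtype.ext hvv' ▸ hv')⟩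
  have hadj : (proximityGraph s (3 * r)).Adj z ⟨w, hws⟩ :=
    (SimpleGraph.fromRel_adj _ _ _).2
      ⟨fun h => hwA ⟨z, hz, congrArg Subtype.val h⟩, Or.inl hzw⟩
  exact hwA ⟨_, SimpleGraph.Reachable.trans hz hadj.reachable, rfl⟩

theorem norm_sub_le_of_net {F : Type*} [SeminormedAddCommGroup F] {M s : Set E} {f g : E → F}
    {L δ η : ℝ} (hL : 0 ≤ L) (hsM : s ⊆ M) (hs : ∀ x ∈ M, ∃ z ∈ s, ‖x - z‖ ≤ δ)
    (hf : ∀ x ∈ M, ∀ x' ∈ M, ‖x - x'‖ ≤ δ → ‖f x - f x'‖ ≤ L * ‖x - x'‖)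
    (hg : ∀ x ∈ M, ∀ x' ∈ M, ‖x - x'‖ ≤ δ → ‖g x - g x'‖ ≤ L * ‖x - x'‖)
    (hfg : ∀ z ∈ s, ‖f z - g z‖ ≤ η) {x : E} (hx : x ∈ M) :
    ‖f x - g x‖ ≤ 2 * L * δ + η := by
  obtain ⟨z, hz, hxz⟩ := hs x hx
  calc ‖f x - g x‖ = ‖(f x - f z) + (f z - g z) - (g x - g z)‖ := by congr 1; abel
    _ ≤ ‖f x - f z‖ + ‖f z - g z‖ + ‖g x - g z‖ :=
        norm_sub_le_of_le (norm_add_le _ _) le_rfl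
    _ ≤ L * δ + η + L * δ := by
        gcongr
        · exact (hf x hx z (hsM hz) hxz).trans (by gcongr)
        · exact hfg z hz
        · exact (hg x hx z (hsM hz) hxz).trans (by gcongr)
    _ = 2 * L * δ + η := by ring

structure ChainedNet (M : Set E) (x₀ : E) (δ : ℝ) where
  carrier : Finset E
  root_mem : x₀ ∈ carrier
  subset : ↑carrier ⊆ M
  covers : ∀ x ∈ M, ∃ z ∈ carrier, ‖x - z‖ ≤ δ
  parent : carrier → carrier
  rank : carrier → ℕ
  rank_parent_lt : ∀ z ≠ ⟨x₀, root_mem⟩, rank (parent z) < rank z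
  norm_sub_parent_le : ∀ z : carrier, ‖(z : E) - (parent z : E)‖ ≤ 3 * δ

end Nets

section Quantization

variable {ι : Type*}

noncomputable def quant (τ : ℝ) (v : EuclideanSpace ℝ ι) : ι → ℤ :=
  fun i => round (v i / τ)

@[simp]
theorem quant_zero (τ : ℝ) : quant τ (0 : EuclideanSpace ℝ ι) = 0 := by
  funext i
  simp [quant]

theorem abs_sub_mul_quant_le {τ : ℝ} (hτ : 0 < τ) (v : EuclideanSpace ℝ ι) (i : ι) :
    |v i - τ * quant τ v i| ≤ τ / 2 := by
  have h := abs_sub_round (v i / τ)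
  rw [show v i - τ * quant τ v i = τ * (v i / τ - round (v i / τ)) by
    unfold quant; field_simp, abs_mul, abs_of_pos hτ]
  nlinarith

variable [Fintype ι]

theorem EuclideanSpace.norm_le_sqrt_card_mul {t : ℝ} (ht : 0 ≤ t) (v : EuclideanSpace ℝ ι)
    (hv : ∀ i, |v i| ≤ t) : ‖v‖ ≤ √(Fintype.card ι) * t := by
  calc ‖v‖ = √(∑ i, ‖v i‖ ^ 2) := EuclideanSpace.norm_eq v
    _ ≤ √(∑ _i : ι, t ^ 2) := by
        gcongr with i
        exact hv i
    _ = √(Fintype.card ι) * t := by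
        rw [Finset.sum_const, Finset.card_univ, nsmul_eq_mul, Real.sqrt_mul (Nat.cast_nonneg _),
          Real.sqrt_sq ht]

theorem norm_sub_le_of_quant_eq {τ : ℝ} (hτ : 0 < τ) {u v : EuclideanSpace ℝ ι}
    (h : quant τ u = quant τ v) : ‖u - v‖ ≤ √(Fintype.card ι) * τ := by
  refine EuclideanSpace.norm_le_sqrt_card_mul hτ.le _ fun i => ?_
  have hu := abs_sub_mul_quant_le hτ u i
  have hv := abs_sub_mul_quant_le hτ v i
  rw [h] at hu
  calc |(u - v) i| = |(u i - τ * quant τ v i) - (v i - τ * quant τ v i)| := by simp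
    _ ≤ τ := (abs_sub _ _).trans (by linarith)

variable [DecidableEq ι]

variable (ι) in
noncomputable def intBox (K : ℕ) : Finset (ι → ℤ) :=
  Fintype.piFinset fun _ => Finset.Icc (-(K : ℤ)) K

theorem card_intBox (K : ℕ) : (intBox ι K).card = (2 * K + 1) ^ Fintype.card ι := by
  rw [intBox, Fintype.card_piFinset, Finset.prod_const, Finset.card_univ, Int.card_Icc]
  congr 1
  omega

theorem quant_sub_quant_mem_intBox {τ : ℝ} (hτ : 0 < τ) {u v : EuclideanSpace ℝ ι} {K : ℕ}
    (h : ‖u - v‖ ≤ K * τ) : quant τ u - quant τ v ∈ intBox ι (K + 1) := by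
  refine Fintype.mem_piFinset.2 fun i => Finset.mem_Icc.2 (abs_le.1 ?_)
  have hu := abs_sub_mul_quant_le hτ u i
  have hv := abs_sub_mul_quant_le hτ v i
  have huv : |u i - v i| ≤ K * τ := (PiLp.norm_apply_le (u - v) i).trans h
  have hdiff : τ * |((quant τ u i - quant τ v i : ℤ) : ℝ)| ≤ τ * (K + 1) := by
    rw [← abs_of_pos hτ, ← abs_mul, abs_of_pos hτ]
    calc |τ * ((quant τ u i - quant τ v i : ℤ) : ℝ)|
        = |(u i - v i) - (u i - τ * quant τ u i) + (v i - τ * quant τ v i)| := by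
          push_cast; ring_nf
      _ ≤ K * τ + τ / 2 + τ / 2 := by
          refine (abs_add_le _ _).trans (add_le_add ((abs_sub _ _).trans ?_) hv)
          exact add_le_add huv hu
      _ = τ * (K + 1) := by ring
  exact_mod_cast le_of_mul_le_mul_left hdiff hτ

end Quantization

section CoveringNumbers

variable {p : ℕ} {M : Set (Euc p)}

theorem coverNumF_le_card_of_code {κ : Type*} {G : Set (Euc p → Euc p)} {η : ℝ}
    (S : Finset κ) (code : (Euc p → Euc p) → κ) (hcode : ∀ f ∈ G, code f ∈ S)
    (hclose : ∀ f ∈ G, ∀ g ∈ G, code f = code g → ∀ x ∈ M, ‖f x - g x‖ ≤ η) :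
    coverNumF G M η ≤ S.card := by
  classical
  have hrep : ∀ k, ∃ g, (∃ f ∈ G, code f = k) → g ∈ G ∧ code g = k := fun k => by
    by_cases hk : ∃ f ∈ G, code f = k
    · obtain ⟨f, hf, rfl⟩ := hk
      exact ⟨f, fun _ => ⟨hf, rfl⟩⟩
    · exact ⟨0, fun h => absurd h hk⟩
  choose rep hrep using hrep
  unfold coverNumF
  refine (Nat.sInf_le ?_).trans (Finset.card_image_le (s := S) (f := rep))
  refine ⟨S.image rep, rfl, fun f hf => ?_⟩
  obtain ⟨hgG, hgf⟩ := hrep (code f) ⟨f, hf, rfl⟩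
  exact ⟨rep (code f), Finset.mem_image_of_mem _ (hcode f hf), hclose f hf _ hgG hgf.symm⟩

theorem exists_subset_card_le_coverNumSet (hM : IsCompact M) {ε : ℝ} (hε : 0 < ε) :
    ∃ s : Finset (Euc p), ↑s ⊆ M ∧ s.card ≤ coverNumSet M ε ∧
      ∀ x ∈ M, ∃ z ∈ s, ‖x - z‖ ≤ 2 * ε := by
  classical
  have hcovers : {N | ∃ T : Finset (Euc p), T.card = N ∧
      ∀ x ∈ M, ∃ z ∈ T, ‖x - z‖ ≤ ε}.Nonempty := by
    obtain ⟨t, -, ht, hMt⟩ := finite_approx_of_totallyBounded hM.totallyBounded ε hε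
    refine ⟨_, ht.toFinset, rfl, fun x hx => ?_⟩
    obtain ⟨y, hy, hxy⟩ := Set.mem_iUnion₂.1 (hMt hx)
    exact ⟨y, ht.mem_toFinset.2 hy, (mem_ball_iff_norm.1 hxy).le⟩
  obtain ⟨T, hTcard, hT⟩ := Nat.sInf_mem hcovers
  have hmove : ∀ z, ∃ y, (∃ x ∈ M, ‖x - z‖ ≤ ε) → y ∈ M ∧ ‖y - z‖ ≤ ε := fun z => by
    by_cases hz : ∃ x ∈ M, ‖x - z‖ ≤ ε
    · obtain ⟨x, hx, hxz⟩ := hz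
      exact ⟨x, fun _ => ⟨hx, hxz⟩⟩
    · exact ⟨0, fun h => absurd h hz⟩
  choose move hmove using hmove
  refine ⟨(T.filter fun z => ∃ x ∈ M, ‖x - z‖ ≤ ε).image move, ?_, ?_, ?_⟩
  · intro y hy
    obtain ⟨z, hz, rfl⟩ := Finset.mem_image.1 hy
    exact (hmove z (Finset.mem_filter.1 hz).2).1
  · exact Finset.card_image_le.trans ((Finset.card_filter_le _ _).trans hTcard.le)
  · intro x hx
    obtain ⟨z, hz, hxz⟩ := hT x hx
    have hnear : ∃ x ∈ M, ‖x - z‖ ≤ ε := ⟨x, hx, hxz⟩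
    refine ⟨move z, Finset.mem_image_of_mem _ (Finset.mem_filter.2 ⟨hz, hnear⟩), ?_⟩
    calc ‖x - move z‖ ≤ ‖x - z‖ + ‖move z - z‖ := by
          rw [norm_sub_rev (move z)]
          exact norm_sub_le_norm_sub_add_norm_sub _ _ _
      _ ≤ 2 * ε := by linarith [(hmove z hnear).2]

theorem exists_chainedNet (hM : IsCompact M) (hconn : IsPreconnected M) {x₀ : Euc p}
    (hx₀ : x₀ ∈ M) {ε : ℝ} (hε : 0 < ε) :
    ∃ σ : ChainedNet M x₀ (2 * ε), σ.carrier.card ≤ 2 * coverNumSet M ε := by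
  classical
  obtain ⟨s, hsM, hcard, hs⟩ := exists_subset_card_le_coverNumSet hM hε
  have hN : 1 ≤ coverNumSet M ε := by
    obtain ⟨z, hz, -⟩ := hs x₀ hx₀
    exact (Finset.card_pos.2 ⟨z, hz⟩).trans_le hcard
  have htM : ↑(insert x₀ s) ⊆ M := by
    rw [Finset.coe_insert]
    exact Set.insert_subset hx₀ hsM
  have ht : ∀ x ∈ M, ∃ z ∈ insert x₀ s, ‖x - z‖ ≤ 2 * ε := fun x hx =>
    let ⟨z, hz, hxz⟩ := hs x hx
    ⟨z, Finset.mem_insert_of_mem hz, hxz⟩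
  set root : ↥(↑(insert x₀ s) : Set (Euc p)) := ⟨x₀, Finset.mem_insert_self _ _⟩
  set Γ := proximityGraph (↑(insert x₀ s) : Set (Euc p)) (3 * (2 * ε))
  have hΓ : Γ.Connected :=
    hconn.proximityGraph_connected htM (by positivity) ht ⟨x₀, Finset.mem_insert_self _ _⟩
  obtain ⟨parent, hroot, hparent⟩ := hΓ.exists_parent root
  refine ⟨{ carrier := insert x₀ s
            root_mem := Finset.mem_insert_self _ _
            subset := htM
            covers := ht
            parent := parent
            rank := fun z => Γ.dist z root
            rank_parent_lt := fun z hz => (hparent z hz).2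
            norm_sub_parent_le := fun z => ?_ }, ?_⟩
  · by_cases hz : z = root
    · rw [hz, hroot, sub_self, norm_zero]
      positivity
    · exact (norm_sub_lt_of_proximityGraph_adj (hparent z hz).1).le
  · exact (Finset.card_insert_le _ _).trans (by omega)

theorem ChainedNet.coverNumF_le {x₀ : Euc p} {δ : ℝ} (σ : ChainedNet M x₀ δ)
    {G : Set (Euc p → Euc p)} {L η : ℝ} (hG₀ : ∀ f ∈ G, f x₀ = 0)
    (hG : ∀ f ∈ G, ∀ x ∈ M, ∀ x' ∈ M, ‖x - x'‖ ≤ 3 * δ → ‖f x - f x'‖ ≤ L * ‖x - x'‖)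
    (hL : 0 ≤ L) (hη : 0 < η) (hLδ : 4 * L * δ ≤ η) :
    coverNumF G M η ≤ (4 * p + 7) ^ (p * σ.carrier.card) := by
  classical
  have hδ : 0 ≤ δ := by
    obtain ⟨z, -, hz⟩ := σ.covers x₀ (σ.subset σ.root_mem)
    exact (norm_nonneg _).trans hz
  have hGδ : ∀ f ∈ G, ∀ x ∈ M, ∀ x' ∈ M, ‖x - x'‖ ≤ δ → ‖f x - f x'‖ ≤ L * ‖x - x'‖ :=
    fun f hf x hx x' hx' h => hG f hf x hx x' hx' (h.trans (by linarith))
  set τ := η / (2 * (p + 1)) with hτ_def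
  have hτ : 0 < τ := by positivity
  have hpτ : ((2 * p + 2 : ℕ) : ℝ) * τ = η := by
    rw [hτ_def]; push_cast; field_simp
  have hsqrt : √(p : ℝ) ≤ p + 1 := Real.sqrt_le_iff.2 ⟨by positivity, by nlinarith⟩
  refine (coverNumF_le_card_of_code
    (Fintype.piFinset fun _ : σ.carrier => intBox (Fin p) (2 * p + 2 + 1))
    (fun f z => quant τ (f z) - quant τ (f (σ.parent z))) (fun f hf => ?_)
    (fun f hf g hg hfg x hx => ?_)).trans_eq ?_
  · refine Fintype.mem_piFinset.2 fun z => quant_sub_quant_mem_intBox hτ ?_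
    calc ‖f z - f (σ.parent z)‖ ≤ L * ‖(z : Euc p) - σ.parent z‖ :=
          hG f hf _ (σ.subset z.2) _ (σ.subset (σ.parent z).2) (σ.norm_sub_parent_le z)
      _ ≤ L * (3 * δ) := by gcongr; exact σ.norm_sub_parent_le z
      _ ≤ _ := by rw [hpτ]; linarith
  · have hquant : (fun z : σ.carrier => quant τ (f z)) = fun z : σ.carrier => quant τ (g z) :=
      eq_of_sub_parent_eq σ.parent σ.rank _ σ.rank_parent_lt (by simp [hG₀ f hf, hG₀ g hg])
        (congrFun hfg)
    have hnet : ∀ z ∈ (σ.carrier : Set (Euc p)), ‖f z - g z‖ ≤ η / 2 := fun z hz => by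
      refine (norm_sub_le_of_quant_eq hτ (congrFun hquant ⟨z, hz⟩)).trans ?_
      rw [Fintype.card_fin]
      calc √(p : ℝ) * τ ≤ (p + 1) * τ := by gcongr
        _ = η / 2 := by rw [hτ_def]; field_simp
    linarith [norm_sub_le_of_net hL σ.subset σ.covers (hGδ f hf) (hGδ g hg) hnet hx]
  · rw [Fintype.card_piFinset, Finset.prod_const, card_intBox, Fintype.card_fin,
      Finset.card_univ, Fintype.card_coe, ← pow_mul]
    ring_nf

theorem RegularityAssumption.norm_sub_le_of_mem_FL {c : ℝ → ℝ}
    (hreg : RegularityAssumption M c) {f : Euc p → Euc p} (hf : f ∈ FL M 1) {x x' : Euc p}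
    (hx : x ∈ M) (hx' : x' ∈ M) {r : ℝ} (hr : ‖x - x'‖ ≤ r) :
    ‖f x - f x'‖ ≤ (1 + c r) * ‖x - x'‖ := by
  obtain ⟨-, hmono, -, hδ⟩ := hreg
  calc ‖f x - f x'‖ ≤ 1 * intrinsicDist M x x' := hf x hx x' hx'
    _ ≤ (1 + c ‖x - x'‖) * ‖x - x'‖ := by rw [one_mul]; exact hδ x hx x' hx'
    _ ≤ (1 + c r) * ‖x - x'‖ := by
        gcongr
        exact hmono (Set.mem_Ici.2 (norm_nonneg _)) (Set.mem_Ici.2 ((norm_nonneg _).trans hr)) hr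

end CoveringNumbers

/-- **Lemma 3.4 (entropy bound for Lipschitz classes).** -/
theorem entropy_bound_lipschitz
    {p : ℕ} (M : Set (Euc p)) (hMcpt : IsCompact M) (hMconn : IsConnected M)
    (c : ℝ → ℝ) (hreg : RegularityAssumption M c)
    (x₀ : Euc p) (hx₀ : x₀ ∈ M) :
    ∃ C > (0 : ℝ), ∀ η : ℝ, 0 < η → η ≤ 1 →
      Real.log (coverNumF {f ∈ FL M 1 | f x₀ = 0} M η) ≤
        C * (Real.log (1 / η) + (coverNumSet M (η / C) : ℝ)) := by
  set L := 1 + c 1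
  have hL : 1 ≤ L := le_add_of_nonneg_right (hreg.1 1)
  set C := 8 * L + 2 * p * Real.log (4 * p + 7)
  have hlog : 0 ≤ Real.log (4 * p + 7) := Real.log_nonneg (by linarith [p.cast_nonneg (α := ℝ)])
  have hLC : 8 * L ≤ C := le_add_of_nonneg_right (mul_nonneg (by positivity) hlog)
  have hC : 0 < C := by linarith
  refine ⟨C, hC, fun η hη hη1 => ?_⟩
  have hε : 0 < η / C := div_pos hη hC
  have hCε : C * (η / C) = η := mul_div_cancel₀ _ hC.ne'
  obtain ⟨σ, hσ⟩ := exists_chainedNet hMcpt hMconn.isPreconnected hx₀ hε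
  have hcover := σ.coverNumF_le (G := {f ∈ FL M 1 | f x₀ = 0}) (L := L) (fun f hf => hf.2)
    (fun f hf x hx x' hx' hxx' =>
      hreg.norm_sub_le_of_mem_FL hf.1 hx hx' (hxx'.trans (by nlinarith)))
    (by linarith) hη (by nlinarith)
  set N := coverNumSet M (η / C)
  calc Real.log (coverNumF {f ∈ FL M 1 | f x₀ = 0} M η)
      ≤ Real.log ((4 * p + 7) ^ (p * σ.carrier.card) : ℕ) :=
        Real.log_natCast_le_log_natCast hcover
    _ = p * σ.carrier.card * Real.log (4 * p + 7) := by
        rw [Nat.cast_pow, Real.log_pow]; push_cast; ring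
    _ ≤ p * (2 * N) * Real.log (4 * p + 7) := by gcongr; exact_mod_cast hσ
    _ ≤ C * N := by nlinarith
    _ ≤ C * (Real.log (1 / η) + N) := by
        gcongr
        exact le_add_of_nonneg_left (Real.log_nonneg (one_le_one_div hη hη1))
end

section
/- Let M ⊂ ℝ^p be compact and connected, and suppose there is a bijection ψ : M → D onto a compact convex set D ⊂ ℝ^d (identified with ℝ^d × {0}^{p−d} ⊂ ℝ^p) such that ‖ψ(x)−ψ(x')‖ = δ_M(x,x') for all x, x' ∈ M. Let μ be a Borel probability measure with support M satisfying: there exists α > 0 such that μ(B(x,η)) ≥ α·vol_d(B(x,η) ∩ M) for all x ∈ M and η > 0, where vol_d is the d-dimensional Hausdorff measure and d the Hausdorff dimension of M. Then the set S_1 of maximizers of E over F_1 equals { ζ∘ψ : ζ is a Euclidean isometry of ℝ^p }. -/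
open MeasureTheory Metric Filter ProbabilityTheory

/-!
Because `ψ` realises the intrinsic metric, `f ∈ F_1` says exactly that `f` moves points of `M`
apart no more than `ψ` does, so `E(f) ≤ E(ψ)` for every such `f`. Both maps are continuous on `M`
and `μ` charges every ball centred in `M`, so a single pair with `‖f x - f x'‖ < ‖ψ x - ψ x'‖`
gives a set of pairs of positive `μ ⊗ μ`-measure on which the gap persists, and then
`E(f) < E(ψ)`. Hence a maximiser satisfies `‖f x - f x'‖ = ‖ψ x - ψ x'‖` on `M`: the map `f ∘ ψ⁻¹`
preserves distances on `D`, hence, after a translation, inner products; it therefore extends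
linearly to the span of `D` and from there to an isometry of the whole space.
-/

open MeasureTheory Metric Set

section Continuity

variable {X Y : Type*}

theorem Set.BijOn.continuousOn_of_dist_le [MetricSpace X] [MetricSpace Y] {f : X → Y}
    {s : Set X} {t : Set Y} (hf : BijOn f s t) (ht : IsCompact t)
    (h : ∀ x ∈ s, ∀ x' ∈ s, dist x x' ≤ dist (f x) (f x')) : ContinuousOn f s := by
  have : CompactSpace t := isCompact_iff_compactSpace.mp ht
  set e := hf.equiv f
  have he : Continuous e.symm := by
    refine (LipschitzWith.of_dist_le_mul (K := 1) fun y y' => ?_).continuous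
    obtain ⟨x, rfl⟩ := e.surjective y
    obtain ⟨x', rfl⟩ := e.surjective y'
    simp only [Equiv.symm_apply_apply, NNReal.coe_one, one_mul, Subtype.dist_eq]
    exact h x x.2 x' x'.2
  rw [continuousOn_iff_continuous_domRestrict]
  exact continuous_subtype_val.comp (he.continuous_symm_of_equiv_compact_to_t2 (f := e.symm))

theorem ContinuousOn.of_norm_sub_le {E F : Type*} [TopologicalSpace X]
    [SeminormedAddCommGroup E] [SeminormedAddCommGroup F] {ψ : X → E} {g : X → F} {s : Set X}
    (hψ : ContinuousOn ψ s) (h : ∀ x ∈ s, ∀ x' ∈ s, ‖g x - g x'‖ ≤ ‖ψ x - ψ x'‖) :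
    ContinuousOn g s := fun b hb =>
  tendsto_iff_norm_sub_tendsto_zero.2 <| squeeze_zero' (.of_forall fun _ => norm_nonneg _)
    (eventually_nhdsWithin_of_forall fun x hx => h x hx b hb)
    (tendsto_iff_norm_sub_tendsto_zero.1 (hψ b hb))

end Continuity

section IntrinsicDist

variable {p : ℕ} {M : Set (Euc p)}

theorem norm_sub_le_intrinsicDist {x x' : Euc p} (h : intrinsicDist M x x' ≠ 0) :
    ‖x - x'‖ ≤ intrinsicDist M x x' := by
  unfold intrinsicDist at h ⊢
  refine le_csInf (nonempty_iff_ne_empty.2 fun he => h (by rw [he, Real.sInf_empty])) ?_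
  rintro T ⟨hT, γ, hγ, -, rfl, rfl⟩
  simpa [← dist_eq_norm, Real.dist_eq, abs_of_nonneg hT] using
    hγ.dist_le_mul 0 (left_mem_Icc.2 hT) T (right_mem_Icc.2 hT)

variable {ψ : Euc p → Euc p}

theorem dist_le_dist_of_norm_sub_eq_intrinsicDist
    (hψ : ∀ x ∈ M, ∀ x' ∈ M, ‖ψ x - ψ x'‖ = intrinsicDist M x x') (hψM : InjOn ψ M) :
    ∀ x ∈ M, ∀ x' ∈ M, dist x x' ≤ dist (ψ x) (ψ x') := by
  intro x hx x' hx'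
  rcases eq_or_ne x x' with rfl | hne
  · simp
  rw [dist_eq_norm, dist_eq_norm, hψ x hx x' hx']
  refine norm_sub_le_intrinsicDist ?_
  rw [← hψ x hx x' hx', norm_ne_zero_iff, sub_ne_zero]
  exact fun h => hne (hψM hx hx' h)

theorem mem_FL_one_iff (hψ : ∀ x ∈ M, ∀ x' ∈ M, ‖ψ x - ψ x'‖ = intrinsicDist M x x')
    {f : Euc p → Euc p} :
    f ∈ FL M 1 ↔ ∀ x ∈ M, ∀ x' ∈ M, ‖f x - f x'‖ ≤ ‖ψ x - ψ x'‖ := by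
  simp only [FL, one_mul, mem_ofPred_eq]
  exact forall₂_congr fun x hx => forall₂_congr fun x' hx' => by rw [hψ x hx x' hx']

end IntrinsicDist

section Energy

theorem ae_mem_prod {α β : Type*} [MeasurableSpace α] [MeasurableSpace β] {μ : Measure α}
    {ν : Measure β} [SFinite ν] {s : Set α} {t : Set β} (hs : ∀ᵐ x ∂μ, x ∈ s)
    (ht : ∀ᵐ y ∂ν, y ∈ t) : ∀ᵐ q ∂μ.prod ν, q ∈ s ×ˢ t :=
  (Measure.quasiMeasurePreserving_fst.ae hs).and (Measure.quasiMeasurePreserving_snd.ae ht)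

theorem ContinuousOn.sq_norm_sub_prod {X E : Type*} [TopologicalSpace X]
    [SeminormedAddCommGroup E] {f : X → E} {s : Set X} (hf : ContinuousOn f s) :
    ContinuousOn (fun q : X × X => ‖f q.1 - f q.2‖ ^ 2) (s ×ˢ s) :=
  ((hf.comp continuousOn_fst fun _ hq => hq.1).sub
    (hf.comp continuousOn_snd fun _ hq => hq.2)).norm.pow 2

variable {p : ℕ} {μ : Measure (Euc p)} [IsFiniteMeasure μ] {M : Set (Euc p)}
  {f g : Euc p → Euc p}

theorem integrable_sq_norm_sub_prod (hM : IsCompact M) (hμM : ∀ᵐ x ∂μ, x ∈ M)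
    (hf : ContinuousOn f M) :
    Integrable (fun q : Euc p × Euc p => ‖f q.1 - f q.2‖ ^ 2) (μ.prod μ) := by
  rw [← Measure.restrict_eq_self_of_ae_mem (ae_mem_prod hμM hμM)]
  exact hf.sq_norm_sub_prod.integrableOn_compact (hM.prod hM)

theorem energy_eq_integral_prod (hM : IsCompact M) (hμM : ∀ᵐ x ∂μ, x ∈ M)
    (hf : ContinuousOn f M) :
    energy μ f = ∫ q, ‖f q.1 - f q.2‖ ^ 2 ∂μ.prod μ :=
  (integral_prod _ (integrable_sq_norm_sub_prod hM hμM hf)).symm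

theorem energy_le_energy (hM : IsCompact M) (hμM : ∀ᵐ x ∂μ, x ∈ M) (hf : ContinuousOn f M)
    (hg : ContinuousOn g M) (hfg : ∀ x ∈ M, ∀ x' ∈ M, ‖f x - f x'‖ ≤ ‖g x - g x'‖) :
    energy μ f ≤ energy μ g := by
  rw [energy_eq_integral_prod hM hμM hf, energy_eq_integral_prod hM hμM hg]
  refine integral_mono_ae (integrable_sq_norm_sub_prod hM hμM hf)
    (integrable_sq_norm_sub_prod hM hμM hg) ?_
  filter_upwards [ae_mem_prod hμM hμM] with q hq
  exact pow_le_pow_left₀ (norm_nonneg _) (hfg _ hq.1 _ hq.2) 2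

theorem energy_lt_energy (hM : IsCompact M) (hμM : ∀ᵐ x ∂μ, x ∈ M) (hf : ContinuousOn f M)
    (hg : ContinuousOn g M) (hfg : ∀ x ∈ M, ∀ x' ∈ M, ‖f x - f x'‖ ≤ ‖g x - g x'‖)
    {x₀ x₀' : Euc p} (hx₀ : x₀ ∈ M) (hx₀' : x₀' ∈ M) (hμx₀ : ∀ ε > 0, 0 < μ (ball x₀ ε))
    (hμx₀' : ∀ ε > 0, 0 < μ (ball x₀' ε)) (hlt : ‖f x₀ - f x₀'‖ < ‖g x₀ - g x₀'‖) :
    energy μ f < energy μ g := by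
  set h : Euc p × Euc p → ℝ := fun q => ‖g q.1 - g q.2‖ ^ 2 - ‖f q.1 - f q.2‖ ^ 2
  have hMM := ae_mem_prod hμM hμM
  have hcont : ContinuousOn h (M ×ˢ M) := hg.sq_norm_sub_prod.sub hf.sq_norm_sub_prod
  obtain ⟨r, hr, hball⟩ : ∃ r > 0, ball (x₀, x₀') r ∩ M ×ˢ M ⊆ {q | 0 < h q} :=
    mem_nhdsWithin_iff.1 <| (hcont _ ⟨hx₀, hx₀'⟩).eventually_const_lt
      (sub_pos.2 (pow_lt_pow_left₀ hlt (norm_nonneg _) two_ne_zero))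
  have hpos : 0 < ∫ q, h q ∂μ.prod μ := by
    refine (integral_pos_iff_support_of_nonneg_ae ?_ ((integrable_sq_norm_sub_prod hM hμM hg).sub
      (integrable_sq_norm_sub_prod hM hμM hf))).2 ?_
    · filter_upwards [hMM] with q hq
      exact sub_nonneg.2 (pow_le_pow_left₀ (norm_nonneg _) (hfg _ hq.1 _ hq.2) 2)
    calc 0 < μ (ball x₀ r) * μ (ball x₀' r) := ENNReal.mul_pos (hμx₀ r hr).ne' (hμx₀' r hr).ne'
      _ = (μ.prod μ) (ball (x₀, x₀') r ∩ M ×ˢ M) := by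
        rw [measure_inter_conull (t := M ×ˢ M) (mem_ae_iff.1 hMM), ← ball_prod_same,
          Measure.prod_prod]
      _ ≤ (μ.prod μ) (Function.support h) := measure_mono fun q hq => (hball hq).ne'
  rw [integral_sub (integrable_sq_norm_sub_prod hM hμM hg) (integrable_sq_norm_sub_prod hM hμM hf),
    ← energy_eq_integral_prod hM hμM hf, ← energy_eq_integral_prod hM hμM hg] at hpos
  linarith

end Energy

section Isometry

open Function

variable {V : Type*} [NormedAddCommGroup V] [InnerProductSpace ℝ V]

theorem real_inner_eq_of_norm_eq_of_norm_sub_eq {a b c d : V} (ha : ‖a‖ = ‖c‖) (hb : ‖b‖ = ‖d‖)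
    (hab : ‖a - b‖ = ‖c - d‖) : inner ℝ a b = inner ℝ c d := by
  have h₁ := norm_sub_sq_real a b
  have h₂ := norm_sub_sq_real c d
  rw [ha, hb, hab] at h₁
  linarith

variable [FiniteDimensional ℝ V]

theorem exists_linearIsometry_eqOn_of_inner_eq {S : Set V} {φ : V → V}
    (h : ∀ v ∈ S, ∀ w ∈ S, inner ℝ (φ v) (φ w) = inner ℝ v w) :
    ∃ L : V →ₗᵢ[ℝ] V, EqOn φ L S := by
  obtain ⟨b, hbS, hb, hbli⟩ := exists_linearIndependent ℝ S
  set W := Submodule.span ℝ S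
  let B : Module.Basis b ℝ W := (Module.Basis.span hbli).map
    (LinearEquiv.ofEq _ _ (by rw [Subtype.range_coe, hb]))
  have hB : ∀ i, (B i : V) = i := fun i => by simp [B, Module.Basis.span_apply]
  let T : W →ₗ[ℝ] V := B.constr ℝ fun i => φ i
  have hTB : ∀ i, T (B i) = φ i := fun i => B.constr_basis ℝ _ i
  have hφT : ∀ s ∈ S, ∀ w : W, inner ℝ (φ s) (T w) = inner ℝ s (w : V) := fun s hs =>
    LinearMap.congr_fun (B.ext (f₁ := innerₛₗ ℝ (φ s) ∘ₗ T) (f₂ := innerₛₗ ℝ s ∘ₗ W.subtype)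
      fun i => by simpa [hTB, hB] using h s hs i (hbS i.2))
  have hTT : ∀ w u : W, inner ℝ (T w) (T u) = inner ℝ (w : V) u := fun w =>
    LinearMap.congr_fun (B.ext (f₁ := innerₛₗ ℝ (T w) ∘ₗ T) (f₂ := innerₛₗ ℝ (w : V) ∘ₗ W.subtype)
      fun i => by simpa [hTB, hB, real_inner_comm] using hφT i (hbS i.2) w)
  let L : W →ₗᵢ[ℝ] V := ⟨T, fun w => by
    rw [← sq_eq_sq₀ (norm_nonneg _) (norm_nonneg _), ← real_inner_self_eq_norm_sq,
      ← real_inner_self_eq_norm_sq, hTT, Submodule.coe_inner]⟩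
  refine ⟨L.extend, fun s hs => ?_⟩
  have hsW : s ∈ W := Submodule.subset_span hs
  change φ s = L.extend (⟨s, hsW⟩ : W)
  rw [L.extend_apply]
  change φ s = T ⟨s, hsW⟩
  rw [← sub_eq_zero, ← inner_self_eq_zero (𝕜 := ℝ), inner_sub_left, inner_sub_right,
    inner_sub_right, h s hs s hs, real_inner_comm (φ s) (T _), hφT s hs, hTT]
  simp

theorem exists_isometry_eqOn_of_norm_sub_eq {S : Set V} {φ : V → V}
    (h : ∀ v ∈ S, ∀ w ∈ S, ‖φ v - φ w‖ = ‖v - w‖) : ∃ ζ : V → V, Isometry ζ ∧ EqOn φ ζ S := by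
  rcases S.eq_empty_or_nonempty with rfl | ⟨z, hz⟩
  · exact ⟨id, isometry_id, eqOn_empty _ _⟩
  obtain ⟨L, hL⟩ := exists_linearIsometry_eqOn_of_inner_eq (S := (· + z) ⁻¹' S)
    (φ := fun v => φ (v + z) - φ z) fun v hv w hw =>
      real_inner_eq_of_norm_eq_of_norm_sub_eq (by simpa using h _ hv z hz)
        (by simpa using h _ hw z hz) (by simpa using h _ hv _ hw)
  refine ⟨fun x => L (x - z) + φ z, Isometry.of_dist_eq fun x y => ?_, fun x hx => ?_⟩
  · rw [dist_add_right, L.isometry.dist_eq, dist_sub_right]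
  · have hLx := hL (show x - z ∈ (· + z) ⁻¹' S by simpa using hx)
    simp only [sub_add_cancel] at hLx
    exact eq_add_of_sub_eq hLx

theorem exists_isometry_comp_eqOn_of_norm_sub_eq {α : Type*} {s : Set α} {f ψ : α → V}
    (h : ∀ x ∈ s, ∀ x' ∈ s, ‖f x - f x'‖ = ‖ψ x - ψ x'‖) :
    ∃ ζ : V → V, Isometry ζ ∧ EqOn f (ζ ∘ ψ) s := by
  have hfψ : ∀ x ∈ s, ∀ x' ∈ s, ψ x = ψ x' → f x = f x' := fun x hx x' hx' hψx => by
    rw [← sub_eq_zero, ← norm_eq_zero, h x hx x' hx', hψx, sub_self, norm_zero]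
  rcases isEmpty_or_nonempty α with hα | hα
  · exact ⟨id, isometry_id, fun x => isEmptyElim x⟩
  have hinv : ∀ x ∈ s, invFunOn ψ s (ψ x) ∈ s ∧ ψ (invFunOn ψ s (ψ x)) = ψ x := fun x hx =>
    ⟨invFunOn_mem ⟨x, hx, rfl⟩, invFunOn_eq ⟨x, hx, rfl⟩⟩
  obtain ⟨ζ, hζ, hfζ⟩ := exists_isometry_eqOn_of_norm_sub_eq (S := ψ '' s)
    (φ := f ∘ invFunOn ψ s) <| by
      rintro _ ⟨x, hx, rfl⟩ _ ⟨x', hx', rfl⟩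
      rw [comp_apply, comp_apply, h _ (hinv x hx).1 _ (hinv x' hx').1, (hinv x hx).2,
        (hinv x' hx').2]
  refine ⟨ζ, hζ, fun x hx => ?_⟩
  rw [comp_apply, ← hfζ (mem_image_of_mem ψ hx), comp_apply]
  exact hfψ x hx _ (hinv x hx).1 (hinv x hx).2.symm

end Isometry

theorem continuum_mvu_convex_consistency_general
    {p : ℕ}
    (μ : Measure (Euc p)) [IsProbabilityMeasure μ]
    (M : Set (Euc p)) (hMcpt : IsCompact M)
    (hMfull : μ M = 1)
    (hMsupp : ∀ x ∈ M, ∀ ε > 0, 0 < μ (Metric.ball x ε))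
    (D : Set (Euc p)) (hDcpt : IsCompact D)
    (ψ : Euc p → Euc p) (hψbij : Set.BijOn ψ M D)
    (hψiso : ∀ x ∈ M, ∀ x' ∈ M, ‖ψ x - ψ x'‖ = intrinsicDist M x x') :
    ∀ f : Euc p → Euc p,
      (f ∈ FL M 1 ∧ ∀ g ∈ FL M 1, energy μ g ≤ energy μ f) ↔
      ∃ ζ : Euc p → Euc p, Isometry ζ ∧ Set.EqOn f (ζ ∘ ψ) M := by
  have hμM : ∀ᵐ x ∂μ, x ∈ M :=
    mem_ae_iff.2 ((prob_compl_eq_zero_iff hMcpt.measurableSet).2 hMfull)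
  have hψ : ContinuousOn ψ M := hψbij.continuousOn_of_dist_le hDcpt
    (dist_le_dist_of_norm_sub_eq_intrinsicDist hψiso hψbij.injOn)
  have hFL : ∀ g, g ∈ FL M 1 ↔ _ := fun g => mem_FL_one_iff hψiso (f := g)
  have hle : ∀ g ∈ FL M 1, energy μ g ≤ energy μ ψ := fun g hg =>
    energy_le_energy hMcpt hμM (hψ.of_norm_sub_le ((hFL g).1 hg)) hψ ((hFL g).1 hg)
  intro f
  constructor
  · rintro ⟨hf, hmax⟩
    refine exists_isometry_comp_eqOn_of_norm_sub_eq fun x hx x' hx' =>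
      ((hFL f).1 hf x hx x' hx').eq_of_not_lt fun hlt => ?_
    exact (energy_lt_energy hMcpt hμM (hψ.of_norm_sub_le ((hFL f).1 hf)) hψ ((hFL f).1 hf) hx hx'
      (hMsupp x hx) (hMsupp x' hx') hlt).not_ge (hmax ψ ((hFL ψ).2 fun _ _ _ _ => le_rfl))
  · rintro ⟨ζ, hζ, hfζ⟩
    have hfψ : ∀ x ∈ M, ∀ x' ∈ M, ‖f x - f x'‖ = ‖ψ x - ψ x'‖ := fun x hx x' hx' => by
      rw [hfζ hx, hfζ hx', Function.comp_apply, Function.comp_apply, ← dist_eq_norm,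
        hζ.dist_eq, dist_eq_norm]
    have hf : f ∈ FL M 1 := (hFL f).2 fun x hx x' hx' => (hfψ x hx x' hx').le
    exact ⟨hf, fun g hg => (hle g hg).trans (energy_le_energy hMcpt hμM hψ
      (hψ.of_norm_sub_le ((hFL f).1 hf)) fun x hx x' hx' => (hfψ x hx x' hx').ge)⟩

/-- **Theorem 4.1 (consistency under the convexity assumption).**  If `M` is isometric (via
`ψ`, for the intrinsic metric) to a compact convex set `D ⊂ ℝ^d × {0}^{p−d} ⊂ ℝ^p`, and `μ`
dominates the `d`-dimensional Hausdorff measure on `M` (where `d` is the Hausdorff dimension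
of `M`), then the maximizers of the continuum energy over `F_1` are exactly the maps of the
form `ζ ∘ ψ` with `ζ` a Euclidean isometry of `ℝ^p` (as functions on `M`). -/
theorem continuum_mvu_convex_consistency
    {p d : ℕ} (hdp : d ≤ p)
    (μ : Measure (Euc p)) [IsProbabilityMeasure μ]
    (M : Set (Euc p)) (hMcpt : IsCompact M) (hMconn : IsConnected M)
    (hMfull : μ M = 1)
    (hMsupp : ∀ x ∈ M, ∀ ε > 0, 0 < μ (Metric.ball x ε))
    (D : Set (Euc p)) (hDcpt : IsCompact D) (hDconv : Convex ℝ D)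
    (hDsub : ∀ z ∈ D, ∀ i : Fin p, d ≤ (i : ℕ) → z i = 0)
    (ψ : Euc p → Euc p) (hψbij : Set.BijOn ψ M D)
    (hψiso : ∀ x ∈ M, ∀ x' ∈ M, ‖ψ x - ψ x'‖ = intrinsicDist M x x')
    (hdimH : dimH M = d)
    (α : ℝ) (hα : 0 < α)
    (hdens : ∀ x ∈ M, ∀ η > (0 : ℝ),
      ENNReal.ofReal α * μH[(d : ℝ)] (Metric.closedBall x η ∩ M) ≤
        μ (Metric.closedBall x η)) :
    ∀ f : Euc p → Euc p,
      (f ∈ FL M 1 ∧ ∀ g ∈ FL M 1, energy μ g ≤ energy μ f) ↔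
      ∃ ζ : Euc p → Euc p, Isometry ζ ∧ Set.EqOn f (ζ ∘ ψ) M :=
  continuum_mvu_convex_consistency_general μ M hMcpt hMfull hMsupp D hDcpt ψ hψbij hψiso
end

section
/- Let μ be a Borel probability measure on ℝ^p whose support M is compact, connected, and satisfies the regularity assumption with some modulus c, and let x_1, x_2, … be i.i.d. samples from μ. Then sup_{f ∈ F_1} | E(Y_n(f)) − E(f) | → 0 almost surely as n → ∞. -/
open MeasureTheory Metric Filter ProbabilityTheory

/-!
Functions in `F_1` are `K`-Lipschitz on `M` for the Euclidean metric, `K = 1 + c (diam M)`, so after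
subtracting their value at a point of `M` they are bounded by `D = K · diam M`. For each
`η = 1/(k+1)` this family is `η`-covered, uniformly on `M`, by finitely many measurable step
functions that are constant on the cells of a nearest-point partition of a finite net of `M`; the
empirical and the continuum energy both move by at most `8Dη` under such a perturbation. For each of
these countably many step functions `P` the empirical energy converges almost surely, by the strong
law applied to `P(x_i)` and `‖P(x_i)‖²`, because
`E(Y_n(P)) = n/(n-1) · (2 · avg ‖P(x_i)‖² - 2 ‖avg P(x_i)‖²)`; a finite net at every scale then
makes the convergence uniform over `F_1`.
-/
open scoped RealInnerProductSpace Topology NNReal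

theorem LipschitzOnWith.sub_const {α E : Type*} [PseudoMetricSpace α] [SeminormedAddCommGroup E]
    {K : ℝ≥0} {f : α → E} {s : Set α} (hf : LipschitzOnWith K f s) (c : E) :
    LipschitzOnWith K (fun x => f x - c) s :=
  .of_dist_le_mul fun x hx y hy => (dist_sub_right _ _ c).trans_le (hf.dist_le_mul x hx y hy)

theorem LipschitzOnWith.dist_le_mul_diam {α β : Type*} [PseudoMetricSpace α]
    [PseudoMetricSpace β] {K : ℝ≥0} {f : α → β} {s : Set α} (hf : LipschitzOnWith K f s)
    (hs : Bornology.IsBounded s) {x y : α} (hx : x ∈ s) (hy : y ∈ s) :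
    dist (f x) (f y) ≤ K * diam s :=
  (hf.dist_le_mul x hx y hy).trans (mul_le_mul_of_nonneg_left (dist_le_diam_of_mem hs hx hy) K.2)

theorem lipschitzOnWith_of_mem_FL {p : ℕ} {M : Set (Euc p)} {c : ℝ → ℝ}
    (hreg : RegularityAssumption M c) (hM : Bornology.IsBounded M) {L : ℝ} (hL : 0 ≤ L)
    {f : Euc p → Euc p} (hf : f ∈ FL M L) :
    LipschitzOnWith (Real.toNNReal (L * (1 + c (diam M)))) f M := by
  obtain ⟨-, hmono, -, hdist⟩ := hreg
  refine LipschitzOnWith.of_dist_le_mul fun x hx y hy => ?_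
  have hxy : ‖x - y‖ ≤ diam M := dist_eq_norm x y ▸ dist_le_diam_of_mem hM hx hy
  rw [dist_eq_norm, dist_eq_norm]
  calc ‖f x - f y‖ ≤ L * intrinsicDist M x y := hf x hx y hy
    _ ≤ L * ((1 + c ‖x - y‖) * ‖x - y‖) := by gcongr; exact hdist x hx y hy
    _ ≤ L * ((1 + c (diam M)) * ‖x - y‖) := by
      gcongr
      exact hmono (norm_nonneg _) diam_nonneg hxy
    _ ≤ _ := by
      rw [← mul_assoc]
      gcongr
      exact Real.le_coe_toNNReal _

theorem abs_norm_sub_sq_sub_norm_sub_sq_le {E : Type*} [SeminormedAddCommGroup E]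
    {a b a' b' : E} {D η : ℝ} (ha : ‖a‖ ≤ D) (hb : ‖b‖ ≤ D) (ha' : ‖a'‖ ≤ D) (hb' : ‖b'‖ ≤ D)
    (haa' : ‖a - a'‖ ≤ η) (hbb' : ‖b - b'‖ ≤ η) :
    |‖a - b‖ ^ 2 - ‖a' - b'‖ ^ 2| ≤ 8 * D * η := by
  have hsum : ‖a - b‖ + ‖a' - b'‖ ≤ 4 * D := by
    linarith [norm_sub_le a b, norm_sub_le a' b']
  have hdiff : |‖a - b‖ - ‖a' - b'‖| ≤ 2 * η := by
    refine (abs_norm_sub_norm_le _ _).trans ?_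
    rw [show a - b - (a' - b') = (a - a') - (b - b') by abel]
    linarith [norm_sub_le (a - a') (b - b')]
  rw [sq_sub_sq, abs_mul, abs_of_nonneg (by positivity)]
  calc (‖a - b‖ + ‖a' - b'‖) * |‖a - b‖ - ‖a' - b'‖| ≤ 4 * D * (2 * η) :=
        mul_le_mul hsum hdiff (abs_nonneg _) ((by positivity : (0 : ℝ) ≤ _).trans hsum)
    _ = 8 * D * η := by ring

theorem abs_denergy_sub_denergy_le {p n : ℕ} {y y' : Fin n → Euc p} {C : ℝ} (hC : 0 ≤ C)
    (h : ∀ i j, |‖y i - y j‖ ^ 2 - ‖y' i - y' j‖ ^ 2| ≤ C) :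
    |denergy y - denergy y'| ≤ C := by
  have hcount : ∑ i : Fin n, ∑ j : Fin n, (if i ≠ j then C else 0) = n * (n - 1) * C := by
    have (i j : Fin n) : (if i ≠ j then C else 0) = C - if i = j then C else 0 := by
      split_ifs <;> simp_all
    simp [this, Finset.sum_sub_distrib]
    ring
  have hsum : |∑ i : Fin n, ∑ j : Fin n, ((if i ≠ j then ‖y i - y j‖ ^ 2 else 0) -
      (if i ≠ j then ‖y' i - y' j‖ ^ 2 else 0))| ≤ n * (n - 1) * C := by
    rw [← hcount]
    refine (Finset.abs_sum_le_sum_abs _ _).trans (Finset.sum_le_sum fun i _ => ?_)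
    refine (Finset.abs_sum_le_sum_abs _ _).trans (Finset.sum_le_sum fun j _ => ?_)
    split_ifs <;> simp [h]
  rw [denergy, denergy, ← mul_sub, ← Finset.sum_sub_distrib]
  simp only [← Finset.sum_sub_distrib]
  rw [abs_mul]
  rcases eq_or_ne ((n : ℝ) * (n - 1)) 0 with h0 | h0
  · simpa [h0] using hC
  have hpos : 0 < (n : ℝ) * (n - 1) := by
    refine lt_of_le_of_ne ?_ h0.symm
    rcases Nat.eq_zero_or_pos n with rfl | hn
    · simp
    · nlinarith [show (1 : ℝ) ≤ n by exact_mod_cast hn]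
  rw [abs_of_pos (one_div_pos.2 hpos)]
  calc _ ≤ 1 / ((n : ℝ) * (n - 1)) * (n * (n - 1) * C) := by gcongr
    _ = C := by rw [one_div, inv_mul_cancel_left₀ h0]

theorem integrable_norm_sub_sq_prod {α E : Type*} [MeasurableSpace α] [NormedAddCommGroup E]
    {μ : Measure α} [IsFiniteMeasure μ] {g : α → E} (hg : AEStronglyMeasurable g μ) {c : E}
    {D : ℝ} (hD : ∀ᵐ x ∂μ, ‖g x - c‖ ≤ D) :
    Integrable (fun z : α × α => ‖g z.1 - g z.2‖ ^ 2) (μ.prod μ) := by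
  refine .of_bound ((hg.comp_fst.sub hg.comp_snd).norm.pow 2) ((2 * D) ^ 2) ?_
  filter_upwards [Measure.quasiMeasurePreserving_fst.ae hD,
    Measure.quasiMeasurePreserving_snd.ae hD] with z h₁ h₂
  rw [norm_pow, norm_norm, ← sub_sub_sub_cancel_right _ _ c]
  gcongr
  linarith [norm_sub_le (g z.1 - c) (g z.2 - c)]

theorem abs_energy_sub_energy_le {p : ℕ} {μ : Measure (Euc p)} [IsProbabilityMeasure μ]
    {g g' : Euc p → Euc p}
    (hg : Integrable (fun z : Euc p × Euc p => ‖g z.1 - g z.2‖ ^ 2) (μ.prod μ))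
    (hg' : Integrable (fun z : Euc p × Euc p => ‖g' z.1 - g' z.2‖ ^ 2) (μ.prod μ)) {C : ℝ}
    (h : ∀ᵐ z ∂μ.prod μ, |‖g z.1 - g z.2‖ ^ 2 - ‖g' z.1 - g' z.2‖ ^ 2| ≤ C) :
    |energy μ g - energy μ g'| ≤ C := by
  rw [energy, energy, ← integral_prod _ hg, ← integral_prod _ hg', ← integral_sub hg hg',
    ← Real.norm_eq_abs]
  simpa using norm_integral_le_of_norm_le_const (μ := μ.prod μ)
    (f := fun z => ‖g z.1 - g z.2‖ ^ 2 - ‖g' z.1 - g' z.2‖ ^ 2) h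

theorem abs_norm_sub_sq_sub_le_of_approxOn {α E : Type*} [SeminormedAddCommGroup E]
    {M : Set α} {f P : α → E} {c : E} {D η : ℝ} (hf : ∀ x ∈ M, ‖f x - c‖ ≤ D)
    (hP : ∀ x, ‖P x‖ ≤ D) (hfP : ∀ x ∈ M, ‖f x - c - P x‖ ≤ η) {a b : α} (ha : a ∈ M)
    (hb : b ∈ M) : |‖f a - f b‖ ^ 2 - ‖P a - P b‖ ^ 2| ≤ 8 * D * η := by
  rw [← sub_sub_sub_cancel_right (f a) (f b) c]
  exact abs_norm_sub_sq_sub_norm_sub_sq_le (hf a ha) (hf b hb) (hP a) (hP b) (hfP a ha) (hfP b hb)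

section ApproxOn

variable {p : ℕ} {M : Set (Euc p)} {f P : Euc p → Euc p} {c : Euc p} {D η : ℝ}

theorem abs_denergy_comp_sub_le_of_approxOn (hf : ∀ x ∈ M, ‖f x - c‖ ≤ D)
    (hP : ∀ x, ‖P x‖ ≤ D) (hfP : ∀ x ∈ M, ‖f x - c - P x‖ ≤ η) (hη : 0 ≤ η) {n : ℕ}
    {x : Fin n → Euc p} (hx : ∀ i, x i ∈ M) :
    |denergy (fun i => f (x i)) - denergy (fun i => P (x i))| ≤ 8 * D * η :=
  have hD : 0 ≤ D := (norm_nonneg _).trans (hP 0)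
  abs_denergy_sub_denergy_le (by positivity) fun i j =>
    abs_norm_sub_sq_sub_le_of_approxOn hf hP hfP (hx i) (hx j)

theorem abs_energy_sub_le_of_approxOn {μ : Measure (Euc p)} [IsProbabilityMeasure μ]
    (hμM : ∀ᵐ x ∂μ, x ∈ M) (hfm : AEStronglyMeasurable f μ) (hPm : AEStronglyMeasurable P μ)
    (hf : ∀ x ∈ M, ‖f x - c‖ ≤ D) (hP : ∀ x, ‖P x‖ ≤ D) (hfP : ∀ x ∈ M, ‖f x - c - P x‖ ≤ η) :
    |energy μ f - energy μ P| ≤ 8 * D * η := by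
  refine abs_energy_sub_energy_le
    (integrable_norm_sub_sq_prod hfm (hμM.mono fun x hx => hf x hx))
    (integrable_norm_sub_sq_prod (c := 0) hPm (ae_of_all _ fun x => by simpa using hP x)) ?_
  filter_upwards [Measure.quasiMeasurePreserving_fst.ae hμM,
    Measure.quasiMeasurePreserving_snd.ae hμM] with z h₁ h₂
  exact abs_norm_sub_sq_sub_le_of_approxOn hf hP hfP h₁ h₂

end ApproxOn

theorem denergy_eq {p n : ℕ} (y : Fin n → Euc p) :
    denergy y = (2 * n * ∑ i, ‖y i‖ ^ 2 - 2 * ‖∑ i, y i‖ ^ 2) / (n * (n - 1)) := by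
  have hdiag (i j : Fin n) : (if i ≠ j then ‖y i - y j‖ ^ 2 else 0) = ‖y i - y j‖ ^ 2 := by
    split_ifs with h
    · rfl
    · simp [not_not.1 h]
  simp only [denergy, hdiag]
  simp only [norm_sub_sq_real, Finset.sum_add_distrib, Finset.sum_sub_distrib,
    ← Finset.mul_sum, ← inner_sum, ← sum_inner, real_inner_self_eq_norm_sq, Finset.sum_const,
    Finset.card_univ, Fintype.card_fin, nsmul_eq_mul]
  ring

theorem energy_eq {p : ℕ} {μ : Measure (Euc p)} [IsProbabilityMeasure μ] {g : Euc p → Euc p}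
    (hg : Integrable g μ) (hg2 : Integrable (fun x => ‖g x‖ ^ 2) μ) :
    energy μ g = 2 * ∫ x, ‖g x‖ ^ 2 ∂μ - 2 * ‖∫ x, g x ∂μ‖ ^ 2 := by
  set m₁ := ∫ x, g x ∂μ
  set m₂ := ∫ x, ‖g x‖ ^ 2 ∂μ
  have hinner (x : Euc p) : ∫ x', ‖g x - g x'‖ ^ 2 ∂μ = ‖g x‖ ^ 2 - 2 * ⟪m₁, g x⟫ + m₂ := by
    have hI : Integrable (fun x' => 2 * ⟪g x, g x'⟫) μ := (hg.const_inner _).const_mul 2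
    simp only [norm_sub_sq_real]
    rw [integral_add (f := fun x' => ‖g x‖ ^ 2 - 2 * ⟪g x, g x'⟫) ((integrable_const _).sub hI) hg2,
      integral_sub (integrable_const _) hI, integral_const, integral_const_mul, integral_inner hg,
      real_inner_comm]
    simp only [probReal_univ, one_smul]
    rfl
  have hI : Integrable (fun x => 2 * ⟪m₁, g x⟫) μ := (hg.const_inner _).const_mul 2
  rw [energy]
  simp only [hinner]
  rw [integral_add (f := fun x => ‖g x‖ ^ 2 - 2 * ⟪m₁, g x⟫) (hg2.sub hI) (integrable_const _),
    integral_sub hg2 hI, integral_const, integral_const_mul, integral_inner hg,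
    real_inner_self_eq_norm_sq]
  simp only [probReal_univ, one_smul]
  ring

theorem tendsto_denergy_of_tendsto_averages {p : ℕ} {y : ℕ → Euc p} {m₁ : Euc p} {m₂ : ℝ}
    (h₁ : Tendsto (fun n : ℕ => (n : ℝ)⁻¹ • ∑ i ∈ Finset.range n, y i) atTop (𝓝 m₁))
    (h₂ : Tendsto (fun n : ℕ => (n : ℝ)⁻¹ • ∑ i ∈ Finset.range n, ‖y i‖ ^ 2) atTop (𝓝 m₂)) :
    Tendsto (fun n => denergy (fun i : Fin n => y i)) atTop (𝓝 (2 * m₂ - 2 * ‖m₁‖ ^ 2)) := by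
  have hlim := (tendsto_natCast_div_add_atTop (-1 : ℝ)).mul
    ((h₂.const_mul 2).sub ((h₁.norm.pow 2).const_mul 2))
  rw [one_mul] at hlim
  refine hlim.congr' ((eventually_ge_atTop 2).mono fun n hn => ?_)
  have hn' : (2 : ℝ) ≤ n := by exact_mod_cast hn
  dsimp only
  rw [denergy_eq, Fin.sum_univ_eq_sum_range (fun i => ‖y i‖ ^ 2), Fin.sum_univ_eq_sum_range y,
    norm_smul, smul_eq_mul, mul_pow, Real.norm_eq_abs, abs_of_pos (by positivity)]
  field_simp
  ring

section StrongLaw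

variable {Ω : Type*} [MeasureSpace Ω]

theorem ae_tendsto_average_comp {α E : Type*} [MeasurableSpace α] [NormedAddCommGroup E]
    [NormedSpace ℝ E] [CompleteSpace E] [MeasurableSpace E] [BorelSpace E] {μ : Measure α}
    {X : ℕ → Ω → α} (hXmeas : ∀ i, Measurable (X i)) (hXindep : iIndepFun X ℙ)
    (hXdist : ∀ i, Measure.map (X i) ℙ = μ) {Q : α → E} (hQ : Measurable Q)
    (hint : Integrable Q μ) :
    ∀ᵐ ω, Tendsto (fun n : ℕ => (n : ℝ)⁻¹ • ∑ i ∈ Finset.range n, Q (X i ω)) atTop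
      (𝓝 (∫ x, Q x ∂μ)) := by
  have hident (i : ℕ) : IdentDistrib (X i) (X 0) ℙ ℙ :=
    ⟨(hXmeas i).aemeasurable, (hXmeas 0).aemeasurable, by rw [hXdist i, hXdist 0]⟩
  rw [← hXdist 0] at hint ⊢
  rw [integral_map (hXmeas 0).aemeasurable hint.aestronglyMeasurable]
  exact strong_law_ae (fun i ω => Q (X i ω)) (hint.comp_measurable (hXmeas 0))
    (fun i j hij => (hXindep.indepFun hij).comp hQ hQ) fun i => (hident i).comp hQ

theorem ae_tendsto_denergy_of_bound {p : ℕ} {μ : Measure (Euc p)} [IsProbabilityMeasure μ]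
    {X : ℕ → Ω → Euc p} (hXmeas : ∀ i, Measurable (X i)) (hXindep : iIndepFun X ℙ)
    (hXdist : ∀ i, Measure.map (X i) ℙ = μ) {P : Euc p → Euc p} (hP : Measurable P) {D : ℝ}
    (hPD : ∀ x, ‖P x‖ ≤ D) :
    ∀ᵐ ω, Tendsto (fun n => denergy (fun i : Fin n => P (X i ω))) atTop (𝓝 (energy μ P)) := by
  have hint : Integrable P μ := .of_bound hP.aestronglyMeasurable D (ae_of_all _ hPD)
  have hint2 : Integrable (fun x => ‖P x‖ ^ 2) μ :=
    .of_bound (by fun_prop) (D ^ 2) (ae_of_all _ fun x => by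
      simpa using pow_le_pow_left₀ (norm_nonneg _) (hPD x) 2)
  have h₁ := ae_tendsto_average_comp hXmeas hXindep hXdist hP hint
  have h₂ := ae_tendsto_average_comp hXmeas hXindep hXdist (Q := fun x => ‖P x‖ ^ 2)
    (by fun_prop) hint2
  filter_upwards [h₁, h₂] with ω h₁ h₂
  rw [energy_eq hint hint2]
  exact tendsto_denergy_of_tendsto_averages (y := fun i => P (X i ω)) h₁ h₂

end StrongLaw

theorem IsCompact.exists_seq_net {α : Type*} [PseudoMetricSpace α] {M : Set α}
    (hM : IsCompact M) (hM₀ : M.Nonempty) {δ : ℝ} (hδ : 0 < δ) :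
    ∃ (e : ℕ → α) (N : ℕ), (∀ k, e k ∈ M) ∧ ∀ x ∈ M, ∃ k ≤ N, dist x (e k) < δ := by
  obtain ⟨t, htM, htfin, hcover⟩ := hM.finite_cover_balls hδ
  obtain ⟨n, f, rfl⟩ := htfin.fin_embedding
  obtain ⟨x₀, hx₀⟩ := hM₀
  refine ⟨fun k => if h : k < n then f ⟨k, h⟩ else x₀, n, fun k => ?_, fun x hx => ?_⟩
  · dsimp only
    split_ifs
    exacts [htM (Set.mem_range_self _), hx₀]
  · obtain ⟨_, ⟨i, rfl⟩, hxi⟩ := Set.mem_iUnion₂.1 (hcover hx)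
    exact ⟨i, i.2.le, by simpa [i.2] using hxi⟩

open SimpleFunc in
theorem exists_finite_approxOn_of_lipschitzOnWith {α E : Type*} [PseudoMetricSpace α]
    [MeasurableSpace α] [OpensMeasurableSpace α] [SeminormedAddCommGroup E] [ProperSpace E]
    [MeasurableSpace E] {M : Set α} (hM : IsCompact M) (hM₀ : M.Nonempty) (K : ℝ≥0) (D : ℝ)
    {η : ℝ} (hη : 0 < η) :
    ∃ t : Set (α → E), t.Finite ∧ (∀ P ∈ t, Measurable P ∧ ∀ x, ‖P x‖ ≤ D) ∧
      ∀ g : α → E, LipschitzOnWith K g M → (∀ x ∈ M, ‖g x‖ ≤ D) →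
        ∃ P ∈ t, ∀ x ∈ M, ‖g x - P x‖ ≤ η := by
  set δ := η / (K + 1)
  have hδ : 0 < δ := by positivity
  obtain ⟨e, N, heM, he⟩ := hM.exists_seq_net hM₀ hδ
  obtain ⟨W, hWD, hWfin, hW⟩ := (isCompact_closedBall (0 : E) D).finite_cover_balls hδ
  have := hWfin.to_subtype
  refine ⟨Set.range fun (a : Fin (N + 1) → W) x => (a (Fin.ofNat _ (nearestPtInd e N x)) : E),
    Set.finite_range _, ?_, fun g hg hgD => ?_⟩
  · rintro _ ⟨a, rfl⟩
    refine ⟨(measurable_from_nat (f := fun k => (a (Fin.ofNat _ k) : E))).comp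
      (nearestPtInd e N).measurable, fun x => ?_⟩
    simpa using hWD (a _).2
  have hval (i : Fin (N + 1)) : ∃ w ∈ W, dist (g (e i)) w < δ := by
    simpa using hW (mem_closedBall_zero_iff.2 (hgD _ (heM i)))
  choose a haW ha using hval
  refine ⟨_, ⟨fun i => ⟨a i, haW i⟩, rfl⟩, fun x hx => ?_⟩
  obtain ⟨k, hkN, hk⟩ := he x hx
  set j := nearestPtInd e N x
  set i : Fin (N + 1) := Fin.ofNat _ j
  have hij : (i : ℕ) = j := by
    rw [Fin.val_ofNat, Nat.mod_eq_of_lt (Nat.lt_succ_of_le (nearestPtInd_le _ _ _))]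
  have hnear : dist x (e j) ≤ dist x (e k) := by
    have := edist_nearestPt_le e x hkN
    rwa [edist_comm, edist_comm (e k), edist_dist, edist_dist,
      ENNReal.ofReal_le_ofReal_iff dist_nonneg] at this
  rw [← dist_eq_norm]
  calc dist (g x) (a i) ≤ dist (g x) (g (e j)) + dist (g (e j)) (a i) := dist_triangle _ _ _
    _ ≤ K * δ + δ := by
      gcongr
      · refine (hg.dist_le_mul x hx _ (heM j)).trans ?_
        gcongr
        exact hnear.trans hk.le
      · rw [← hij]
        exact (ha i).le
    _ = η := by
      simp only [δ]
      field_simp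

theorem tendsto_sSup_abs_sub_of_finite_approx {α : Type*} {Φ : ℕ → α → ℝ} {Ψ : α → ℝ}
    {s : Set α} {δ : ℕ → ℝ} (hδ : Tendsto δ atTop (𝓝 0))
    (h : ∀ k, ∃ t : Set α, t.Finite ∧ (∀ a ∈ t, Tendsto (Φ · a) atTop (𝓝 (Ψ a))) ∧
      ∀ f ∈ s, ∃ a ∈ t, ∀ n, |Φ n f - Φ n a| ≤ δ k ∧ |Ψ f - Ψ a| ≤ δ k) :
    Tendsto (fun n => sSup ((fun f => |Φ n f - Ψ f|) '' s)) atTop (𝓝 0) := by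
  rw [Metric.tendsto_atTop]
  intro ε hε
  obtain ⟨k, hk⟩ := (hδ.eventually (gt_mem_nhds (show 0 < ε / 4 by positivity))).exists
  obtain ⟨t, htfin, hconv, happrox⟩ := h k
  have hev : ∀ᶠ n in atTop, ∀ a ∈ t, |Φ n a - Ψ a| < ε / 4 :=
    (eventually_all_finite htfin).2 fun a ha =>
      (hconv a ha).eventually (Metric.ball_mem_nhds _ (by positivity))
  obtain ⟨N, hN⟩ := eventually_atTop.1 hev
  refine ⟨N, fun n hn => ?_⟩
  have hle : sSup ((fun f => |Φ n f - Ψ f|) '' s) ≤ 3 * ε / 4 := by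
    refine Real.sSup_le ?_ (by positivity)
    rintro _ ⟨f, hf, rfl⟩
    obtain ⟨a, ha, hfa⟩ := happrox f hf
    obtain ⟨hΦ, hΨ⟩ := hfa n
    have hna := hN n hn a ha
    rw [abs_le] at hΦ hΨ ⊢
    rw [abs_lt] at hna
    constructor <;> linarith
  have hnonneg : 0 ≤ sSup ((fun f => |Φ n f - Ψ f|) '' s) :=
    Real.sSup_nonneg (by rintro _ ⟨f, -, rfl⟩; exact abs_nonneg _)
  rw [Real.dist_eq, sub_zero, abs_of_nonneg hnonneg]
  linarith

theorem empirical_energy_uniform_lln_general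
    {p : ℕ} {Ω : Type*} [MeasureSpace Ω]
    (μ : Measure (Euc p)) [IsProbabilityMeasure μ]
    (M : Set (Euc p)) (hMcpt : IsCompact M)
    (hMfull : μ M = 1)
    (c : ℝ → ℝ) (hreg : RegularityAssumption M c)
    (X : ℕ → Ω → Euc p) (hXmeas : ∀ i, Measurable (X i))
    (hXindep : iIndepFun X ℙ)
    (hXdist : ∀ i, Measure.map (X i) ℙ = μ) :
    ∀ᵐ ω ∂(ℙ : Measure Ω),
      Tendsto
        (fun n => sSup ((fun f => |denergy (fun i : Fin n => f (X i ω)) - energy μ f|)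
          '' FL M 1))
        atTop (nhds 0) := by
  have hμM : ∀ᵐ x ∂μ, x ∈ M := (prob_compl_eq_zero_iff hMcpt.isClosed.measurableSet).2 hMfull
  obtain ⟨x₀, hx₀⟩ : M.Nonempty := nonempty_of_measure_ne_zero (μ := μ) (by simp [hMfull])
  obtain ⟨K, hlip⟩ : ∃ K, ∀ f ∈ FL M 1, LipschitzOnWith K f M :=
    ⟨_, fun f hf => lipschitzOnWith_of_mem_FL hreg hMcpt.isBounded zero_le_one hf⟩
  set D := K * diam M
  choose t htfin htP htapprox using fun k : ℕ =>
    exists_finite_approxOn_of_lipschitzOnWith (E := Euc p) hMcpt ⟨x₀, hx₀⟩ K D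
      (Nat.one_div_pos_of_nat (n := k))
  have hae : ∀ᵐ ω, (∀ i, X i ω ∈ M) ∧ ∀ k, ∀ P ∈ t k,
      Tendsto (fun n => denergy (fun i : Fin n => P (X i ω))) atTop (𝓝 (energy μ P)) :=
    (ae_all_iff.2 fun i => ae_of_ae_map (hXmeas i).aemeasurable ((hXdist i).symm ▸ hμM)).and
      (ae_all_iff.2 fun k => (ae_ball_iff (htfin k).countable).2 fun P hP =>
        ae_tendsto_denergy_of_bound hXmeas hXindep hXdist (htP k P hP).1 (htP k P hP).2)
  filter_upwards [hae] with ω ⟨hωM, hωconv⟩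
  refine tendsto_sSup_abs_sub_of_finite_approx (δ := fun k : ℕ => 8 * D * (1 / (k + 1)))
    (by simpa using tendsto_one_div_add_atTop_nhds_zero_nat.const_mul (8 * D))
    fun k => ⟨t k, htfin k, hωconv k, fun f hf => ?_⟩
  have hbound (x) (hx : x ∈ M) : ‖f x - f x₀‖ ≤ D := by
    simpa [dist_eq_norm] using (hlip f hf).dist_le_mul_diam hMcpt.isBounded hx hx₀
  have hfm : AEStronglyMeasurable f μ := by
    rw [← Measure.restrict_eq_self_of_ae_mem hμM]
    exact (hlip f hf).continuousOn.aestronglyMeasurable hMcpt.isClosed.measurableSet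
  obtain ⟨P, hP, hfP⟩ := htapprox k _ ((hlip f hf).sub_const _) hbound
  obtain ⟨hPm, hPb⟩ := htP k P hP
  exact ⟨P, hP, fun n =>
    ⟨abs_denergy_comp_sub_le_of_approxOn hbound hPb hfP (by positivity) fun i => hωM i,
      abs_energy_sub_le_of_approxOn hμM hfm hPm.aestronglyMeasurable hbound hPb hfP⟩⟩

/-- **Uniform law of large numbers over `F_1` (equation (2.18)).**  The supremum over `F_1`
of the deviation between empirical and continuum energies converges to zero almost surely. -/
theorem empirical_energy_uniform_lln
    {p : ℕ} {Ω : Type*} [MeasureSpace Ω] [IsProbabilityMeasure (ℙ : Measure Ω)]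
    (μ : Measure (Euc p)) [IsProbabilityMeasure μ]
    (M : Set (Euc p)) (hMcpt : IsCompact M) (hMconn : IsConnected M)
    (hMfull : μ M = 1)
    (hMsupp : ∀ x ∈ M, ∀ ε > 0, 0 < μ (Metric.ball x ε))
    (c : ℝ → ℝ) (hreg : RegularityAssumption M c)
    (X : ℕ → Ω → Euc p) (hXmeas : ∀ i, Measurable (X i))
    (hXindep : iIndepFun X ℙ)
    (hXdist : ∀ i, Measure.map (X i) ℙ = μ) :
    ∀ᵐ ω ∂(ℙ : Measure Ω),
      Tendsto
        (fun n => sSup ((fun f => |denergy (fun i : Fin n => f (X i ω)) - energy μ f|)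
          '' FL M 1))
        atTop (nhds 0) :=
  empirical_energy_uniform_lln_general μ M hMcpt hMfull c hreg X hXmeas hXindep hXdist
end
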